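/- Let N be a natural number and, for j = 0, 1, …, N, let c_j, c̃_j, a_j, ã_j ∈ ℂ and λ_j, λ̃_j ∈ ℂ. Let C, δ, M, ε_φ, ε_λ ≥ 0 and μ, μ̃ > 0, and assume: (i) |c_j| ≤ C and |c_j − c̃_j| ≤ δ for all j; (ii) |a_j| ≤ M and |a_j − ã_j| ≤ ε_φ for all j; (iii) |λ_j − λ̃_j| ≤ ε_λ for all j; (iv) Re(λ_j) ≤ 0 and Re(λ̃_j) ≤ 0 for all j; (v) for every j with Re(λ_j) < 0 one has Re(λ_j) ≤ −μ and Re(λ̃_j) ≤ −μ̃. Then for every t ≥ 0, | Σ_{j=0}^{N} c_j a_j e^{λ_j t} − Σ_{j=0}^{N} c̃_j ã_j e^{λ̃_j t} | ≤ (N+1) ( C·M·e^{−μ t} + (C+δ)·(M+ε_φ)·e^{−μ̃ t} ) + (N+1) ( C·M·ε_λ·t + C·ε_φ + δ·(M+ε_φ) ). -/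

import Mathlib

/-!
Bound the expansions term by term. If `Re λ_j < 0`, both exponentials decay at the rates
`μ` and `μ̃`, and the two terms are estimated separately. If `Re λ_j = 0`, the difference is
split as `c a (e^{λ t} - e^{λ̃ t}) + (c a - c̃ ã) e^{λ̃ t}`; since `exp` is `1`-Lipschitz
on the closed left half-plane, the first part is at most `C M ε_λ t`, and the second part is the
perturbation of a product. Summing the `N + 1` term bounds gives the theorem.
-/

open Finset

theorem Complex.norm_exp_sub_exp_le_of_re_nonpos {z w : ℂ} (hz : z.re ≤ 0) (hw : w.re ≤ 0) :
    ‖exp z - exp w‖ ≤ ‖z - w‖ := by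
  simpa using (convex_halfSpace_re_le (0 : ℝ)).norm_image_sub_le_of_norm_deriv_le (C := 1)
    (fun _ _ => differentiableAt_exp)
    (fun x hx => by simpa [norm_exp] using Real.exp_le_one_iff.2 hx) hw hz

theorem Complex.norm_exp_mul_ofReal_le {z : ℂ} {r t : ℝ} (hz : z.re ≤ r) (ht : 0 ≤ t) :
    ‖exp (z * t)‖ ≤ Real.exp (r * t) := by
  rw [norm_exp, re_mul_ofReal]
  gcongr

theorem norm_mul_sub_mul_le_of_le {R : Type*} [SeminormedRing R] {x x' y y' : R}
    {C δ M ε : ℝ} (hx : ‖x‖ ≤ C) (hxx' : ‖x - x'‖ ≤ δ) (hy : ‖y‖ ≤ M)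
    (hyy' : ‖y - y'‖ ≤ ε) :
    ‖x * y - x' * y'‖ ≤ C * ε + δ * (M + ε) := by
  have hy' : ‖y'‖ ≤ M + ε := (norm_le_norm_add_norm_sub y y').trans (add_le_add hy hyy')
  calc ‖x * y - x' * y'‖ = ‖x * (y - y') + (x - x') * y'‖ := by noncomm_ring
    _ ≤ ‖x * (y - y')‖ + ‖(x - x') * y'‖ := norm_add_le _ _
    _ ≤ C * ε + δ * (M + ε) :=
        add_le_add (norm_mul_le_of_le hx hyy') (norm_mul_le_of_le hxx' hy')

section KoopmanTerm

open Complex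

variable {c c' a a' l l' : ℂ} {C δ M εφ εl t : ℝ}

theorem norm_koopmanTerm_sub_le_of_decay {μ μ' : ℝ} (hc : ‖c‖ ≤ C) (hcc : ‖c - c'‖ ≤ δ)
    (ha : ‖a‖ ≤ M) (haa : ‖a - a'‖ ≤ εφ) (hl : l.re ≤ -μ) (hl' : l'.re ≤ -μ') (ht : 0 ≤ t) :
    ‖c * a * exp (l * t) - c' * a' * exp (l' * t)‖
      ≤ C * M * Real.exp (-μ * t) + (C + δ) * (M + εφ) * Real.exp (-μ' * t) := by
  have hc' : ‖c'‖ ≤ C + δ := (norm_le_norm_add_norm_sub c c').trans <| add_le_add hc hcc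
  have ha' : ‖a'‖ ≤ M + εφ := (norm_le_norm_add_norm_sub a a').trans <| add_le_add ha haa
  exact (norm_sub_le _ _).trans <| add_le_add
    (norm_mul_le_of_le (norm_mul_le_of_le hc ha) (norm_exp_mul_ofReal_le hl ht))
    (norm_mul_le_of_le (norm_mul_le_of_le hc' ha') (norm_exp_mul_ofReal_le hl' ht))

theorem norm_koopmanTerm_sub_le_of_re_nonpos (hc : ‖c‖ ≤ C) (hcc : ‖c - c'‖ ≤ δ)
    (ha : ‖a‖ ≤ M) (haa : ‖a - a'‖ ≤ εφ) (hll : ‖l - l'‖ ≤ εl)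
    (hl : l.re ≤ 0) (hl' : l'.re ≤ 0) (ht : 0 ≤ t) :
    ‖c * a * exp (l * t) - c' * a' * exp (l' * t)‖
      ≤ C * M * εl * t + C * εφ + δ * (M + εφ) := by
  have hlt : (l * t).re ≤ 0 := by
    simpa [re_mul_ofReal] using mul_nonpos_of_nonpos_of_nonneg hl ht
  have hlt' : (l' * t).re ≤ 0 := by
    simpa [re_mul_ofReal] using mul_nonpos_of_nonpos_of_nonneg hl' ht
  have hexp_sub : ‖exp (l * t) - exp (l' * t)‖ ≤ εl * t :=
    calc ‖exp (l * t) - exp (l' * t)‖ ≤ ‖l * t - l' * t‖ :=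
          norm_exp_sub_exp_le_of_re_nonpos hlt hlt'
      _ = ‖l - l'‖ * t := by rw [← sub_mul, norm_mul, norm_real, Real.norm_of_nonneg ht]
      _ ≤ εl * t := by gcongr
  have hexp' : ‖exp (l' * t)‖ ≤ 1 := by simpa using norm_exp_mul_ofReal_le hl' ht
  calc ‖c * a * exp (l * t) - c' * a' * exp (l' * t)‖
      = ‖c * a * (exp (l * t) - exp (l' * t)) + (c * a - c' * a') * exp (l' * t)‖ := by
        congr 1; ring
    _ ≤ ‖c * a * (exp (l * t) - exp (l' * t))‖ + ‖(c * a - c' * a') * exp (l' * t)‖ :=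
        norm_add_le _ _
    _ ≤ C * M * (εl * t) + (C * εφ + δ * (M + εφ)) * 1 :=
        add_le_add (norm_mul_le_of_le (norm_mul_le_of_le hc ha) hexp_sub)
          (norm_mul_le_of_le (norm_mul_sub_mul_le_of_le hc hcc ha haa) hexp')
    _ = C * M * εl * t + C * εφ + δ * (M + εφ) := by ring

end KoopmanTerm

theorem ask_error_bound_general (N : ℕ)
    (c c' a a' l l' : Fin (N + 1) → ℂ)
    (C δ M εφ εl μ μ' : ℝ)
    (hC : 0 ≤ C) (hδ : 0 ≤ δ) (hM : 0 ≤ M) (hεφ : 0 ≤ εφ) (hεl : 0 ≤ εl)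
    (hc : ∀ j, ‖c j‖ ≤ C)
    (hcc : ∀ j, ‖c j - c' j‖ ≤ δ)
    (ha : ∀ j, ‖a j‖ ≤ M)
    (haa : ∀ j, ‖a j - a' j‖ ≤ εφ)
    (hll : ∀ j, ‖l j - l' j‖ ≤ εl)
    (hl : ∀ j, (l j).re ≤ 0) (hl' : ∀ j, (l' j).re ≤ 0)
    (hneg : ∀ j, (l j).re < 0 → (l j).re ≤ -μ ∧ (l' j).re ≤ -μ') :
    ∀ t : ℝ, 0 ≤ t →
      ‖∑ j, c j * a j * Complex.exp (l j * t)
          - ∑ j, c' j * a' j * Complex.exp (l' j * t)‖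
        ≤ (N + 1) * (C * M * Real.exp (-μ * t) + (C + δ) * (M + εφ) * Real.exp (-μ' * t))
          + (N + 1) * (C * M * εl * t + C * εφ + δ * (M + εφ)) := by
  intro t ht
  set decay := C * M * Real.exp (-μ * t) + (C + δ) * (M + εφ) * Real.exp (-μ' * t)
  set drift := C * M * εl * t + C * εφ + δ * (M + εφ)
  have hdecay : 0 ≤ decay := by positivity
  have hdrift : 0 ≤ drift := by positivity
  have hterm : ∀ j, ‖c j * a j * Complex.exp (l j * t) - c' j * a' j * Complex.exp (l' j * t)‖
      ≤ decay + drift := by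
    intro j
    by_cases hj : (l j).re < 0
    · have := norm_koopmanTerm_sub_le_of_decay (hc j) (hcc j) (ha j) (haa j)
        (hneg j hj).1 (hneg j hj).2 ht
      linarith
    · have := norm_koopmanTerm_sub_le_of_re_nonpos (hc j) (hcc j) (ha j) (haa j) (hll j)
        (hl j) (hl' j) ht
      linarith
  rw [← sum_sub_distrib]
  calc _ ≤ ∑ _j : Fin (N + 1), (decay + drift) := norm_sum_le_of_le _ fun j _ => hterm j
    _ = _ := by simp only [sum_const, card_univ, Fintype.card_fin, nsmul_eq_mul]; push_cast; ring

/-- Quantitative form of the ASK approximation error bound (Theorem 3.1):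
comparing a truncated Koopman expansion with its ASK approximation. -/
theorem ask_error_bound (N : ℕ)
    (c c' a a' l l' : Fin (N + 1) → ℂ)
    (C δ M εφ εl μ μ' : ℝ)
    (hC : 0 ≤ C) (hδ : 0 ≤ δ) (hM : 0 ≤ M) (hεφ : 0 ≤ εφ) (hεl : 0 ≤ εl)
    (hμ : 0 < μ) (hμ' : 0 < μ')
    (hc : ∀ j, ‖c j‖ ≤ C)
    (hcc : ∀ j, ‖c j - c' j‖ ≤ δ)
    (ha : ∀ j, ‖a j‖ ≤ M)
    (haa : ∀ j, ‖a j - a' j‖ ≤ εφ)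
    (hll : ∀ j, ‖l j - l' j‖ ≤ εl)
    (hl : ∀ j, (l j).re ≤ 0) (hl' : ∀ j, (l' j).re ≤ 0)
    (hneg : ∀ j, (l j).re < 0 → (l j).re ≤ -μ ∧ (l' j).re ≤ -μ') :
    ∀ t : ℝ, 0 ≤ t →
      ‖∑ j, c j * a j * Complex.exp (l j * t)
          - ∑ j, c' j * a' j * Complex.exp (l' j * t)‖
        ≤ (N + 1) * (C * M * Real.exp (-μ * t) + (C + δ) * (M + εφ) * Real.exp (-μ' * t))
          + (N + 1) * (C * M * εl * t + C * εφ + δ * (M + εφ)) :=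
  ask_error_bound_general N c c' a a' l l' C δ M εφ εl μ μ' hC hδ hM hεφ hεl hc hcc ha haa hll hl
    hl' hneg
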